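/- arXiv:2602.03789 — 2 statements merged into one kernel-verified Lean document; each statement's English description precedes it below -/
import Mathlib

section
/- Let α, β : [0,1] → ℝ be C¹ with α_0 = β_1 = 1, α_1 = β_0 = 0, α̇_t < 0 and β̇_t > 0 for all t ∈ (0,1). Then for every t ∈ (0,1], the function s ↦ ε*_s := α_s²·β̇_s/β_s − α_s·α̇_s is not Lebesgue-integrable on the interval (0, t); equivalently, ∫_0^t ε*_s ds = ∞ for all t ∈ (0,1]. -/
open Set MeasureTheory

/-- For an interpolation schedule (`α, β` C¹ on `[0,1]`, boundary values
`α_0 = β_1 = 1`, `α_1 = β_0 = 0`, `α̇ < 0`, `β̇ > 0` on `(0,1)`), for every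
`t ∈ (0,1]` the statistically optimal diffusion scale
`s ↦ ε*_s = α_s²·β̇_s/β_s − α_s·α̇_s` is not Lebesgue-integrable on `(0, t)`;
equivalently its (lower) integral over `(0, t)` is infinite. -/
theorem stmt4 (α β α' β' : ℝ → ℝ)
    (hαc : ContinuousOn α (Set.Icc 0 1)) (hβc : ContinuousOn β (Set.Icc 0 1))
    (hα : ∀ t ∈ Set.Ioo (0:ℝ) 1, HasDerivAt α (α' t) t)
    (hβ : ∀ t ∈ Set.Ioo (0:ℝ) 1, HasDerivAt β (β' t) t)
    (hα0 : α 0 = 1) (hα1 : α 1 = 0) (hβ0 : β 0 = 0) (hβ1 : β 1 = 1)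
    (hα' : ∀ t ∈ Set.Ioo (0:ℝ) 1, α' t < 0)
    (hβ' : ∀ t ∈ Set.Ioo (0:ℝ) 1, 0 < β' t) :
    ∀ t ∈ Set.Ioc (0:ℝ) 1,
      ¬ MeasureTheory.IntegrableOn
          (fun s => (α s) ^ 2 * β' s / β s - α s * α' s) (Set.Ioo 0 t)
          MeasureTheory.volume ∧
      ∫⁻ s in Set.Ioo (0:ℝ) t,
          ENNReal.ofReal ((α s) ^ 2 * β' s / β s - α s * α' s) = ⊤ := by
  intro t ht
  set f : ℝ → ℝ := fun s => (α s) ^ 2 * β' s / β s - α s * α' s with hf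
  -- monotonicity of α and β
  have hαanti : StrictAntiOn α (Icc 0 1) := by
    apply strictAntiOn_of_deriv_neg (convex_Icc 0 1) hαc
    intro x hx
    rw [interior_Icc] at hx
    rw [(hα x hx).deriv]
    exact hα' x hx
  have hβmono : StrictMonoOn β (Icc 0 1) := by
    apply strictMonoOn_of_deriv_pos (convex_Icc 0 1) hβc
    intro x hx
    rw [interior_Icc] at hx
    rw [(hβ x hx).deriv]
    exact hβ' x hx
  have hαpos : ∀ s ∈ Ioo (0:ℝ) 1, 0 < α s := fun s hs => by
    have := hαanti (Icc_subset_Icc le_rfl le_rfl ⟨hs.1.le, hs.2.le⟩) (right_mem_Icc.2 zero_le_one) hs.2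
    simpa [hα1] using this
  have hβpos : ∀ s ∈ Ioo (0:ℝ) 1, 0 < β s := fun s hs => by
    have := hβmono (left_mem_Icc.2 zero_le_one) ⟨hs.1.le, hs.2.le⟩ hs.1
    simpa [hβ0] using this
  -- the intermediate point t₀ := t/2
  set t₀ : ℝ := t / 2 with ht₀
  have ht₀mem : t₀ ∈ Ioo (0:ℝ) 1 := by
    constructor
    · have := ht.1; rw [ht₀]; linarith
    · have := ht.2; rw [ht₀]; linarith
  set c : ℝ := α t₀ with hc
  have hcpos : 0 < c := hαpos _ ht₀mem
  -- key lower bound for each a ∈ (0, t₀)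
  have key : ∀ a ∈ Ioo (0:ℝ) t₀,
      ENNReal.ofReal (c ^ 2 * (Real.log (β t₀) - Real.log (β a)))
        ≤ ∫⁻ s in Ioo (0:ℝ) t, ENNReal.ofReal (f s) := by
    intro a ha
    have hsub : Icc a t₀ ⊆ Ioo (0:ℝ) 1 := fun x hx =>
      ⟨lt_of_lt_of_le ha.1 hx.1, lt_of_le_of_lt hx.2 ht₀mem.2⟩
    -- log β has derivative β'/β on (a, t₀)
    have hgderiv : ∀ x ∈ Ioo a t₀, HasDerivAt (fun s => Real.log (β s)) (β' x / β x) x := by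
      intro x hx
      have hx1 : x ∈ Ioo (0:ℝ) 1 := hsub (Ioo_subset_Icc_self hx)
      exact (hβ x hx1).log (hβpos x hx1).ne'
    have hgpos : ∀ x ∈ Ioo a t₀, 0 ≤ β' x / β x := by
      intro x hx
      have hx1 : x ∈ Ioo (0:ℝ) 1 := hsub (Ioo_subset_Icc_self hx)
      exact le_of_lt (div_pos (hβ' x hx1) (hβpos x hx1))
    have hgc : ContinuousOn (fun s => Real.log (β s)) (Icc a t₀) := by
      apply ContinuousOn.log
      · exact hβc.mono fun x hx => ⟨(hsub hx).1.le, (hsub hx).2.le⟩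
      · intro x hx; exact (hβpos x (hsub hx)).ne'
    have hint : IntegrableOn (fun x => β' x / β x) (Ioc a t₀) volume :=
      intervalIntegral.integrableOn_deriv_of_nonneg hgc hgderiv hgpos
    have hintIoo : IntegrableOn (fun x => β' x / β x) (Ioo a t₀) volume :=
      hint.mono_set Ioo_subset_Ioc_self
    have hintval : ∫ x in Ioo a t₀, β' x / β x
        = Real.log (β t₀) - Real.log (β a) := by
      rw [← MeasureTheory.integral_Ioc_eq_integral_Ioo,
        ← intervalIntegral.integral_of_le (le_of_lt ha.2)]
      exact intervalIntegral.integral_eq_sub_of_hasDerivAt_of_le (le_of_lt ha.2)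
        hgc hgderiv (by
          rw [intervalIntegrable_iff_integrableOn_Ioc_of_le (le_of_lt ha.2)]
          exact hint)
    -- lintegral of ofReal (β'/β) over Ioo a t₀ equals ofReal of the integral
    have hlint : ∫⁻ x in Ioo a t₀, ENNReal.ofReal (β' x / β x)
        = ENNReal.ofReal (Real.log (β t₀) - Real.log (β a)) := by
      have hnn : 0 ≤ᵐ[volume.restrict (Ioo a t₀)] fun x => β' x / β x := by
        filter_upwards [ae_restrict_mem measurableSet_Ioo] with x hx using hgpos x hx
      rw [← hintval, ← MeasureTheory.ofReal_integral_eq_lintegral_ofReal hintIoo hnn]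
    calc ENNReal.ofReal (c ^ 2 * (Real.log (β t₀) - Real.log (β a)))
        = ENNReal.ofReal (c ^ 2) * ENNReal.ofReal (Real.log (β t₀) - Real.log (β a)) := by
          rw [ENNReal.ofReal_mul (by positivity)]
      _ = ENNReal.ofReal (c ^ 2) * ∫⁻ x in Ioo a t₀, ENNReal.ofReal (β' x / β x) := by
          rw [hlint]
      _ = ∫⁻ x in Ioo a t₀, ENNReal.ofReal (c ^ 2) * ENNReal.ofReal (β' x / β x) := by
          rw [MeasureTheory.lintegral_const_mul' _ _ ENNReal.ofReal_ne_top]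
      _ ≤ ∫⁻ x in Ioo a t₀, ENNReal.ofReal (f x) := by
          apply MeasureTheory.setLIntegral_mono' measurableSet_Ioo
          intro x hx
          have hx1 : x ∈ Ioo (0:ℝ) 1 := hsub (Ioo_subset_Icc_self hx)
          rw [← ENNReal.ofReal_mul (by positivity)]
          apply ENNReal.ofReal_le_ofReal
          have hαx : c ≤ α x := by
            have := hαanti ⟨hx1.1.le, hx1.2.le⟩ ⟨ht₀mem.1.le, ht₀mem.2.le⟩ hx.2
            exact this.le
          have h1 : c ^ 2 * (β' x / β x) ≤ (α x) ^ 2 * β' x / β x := by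
            rw [mul_div_assoc]
            apply mul_le_mul_of_nonneg_right _ (hgpos x hx)
            exact pow_le_pow_left₀ hcpos.le hαx 2
          have h2 : α x * α' x ≤ 0 :=
            mul_nonpos_of_nonneg_of_nonpos (hαpos x hx1).le (hα' x hx1).le
          linarith
      _ ≤ ∫⁻ x in Ioo (0:ℝ) t, ENNReal.ofReal (f x) := by
          apply MeasureTheory.lintegral_mono_set
          intro x hx
          exact ⟨lt_trans ha.1 hx.1, lt_of_lt_of_le hx.2 (by rw [ht₀]; linarith [ht.1])⟩
  -- the lintegral is ⊤
  have htop : ∫⁻ s in Ioo (0:ℝ) t, ENNReal.ofReal (f s) = ⊤ := by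
    by_contra h
    have hlt : (∫⁻ s in Ioo (0:ℝ) t, ENNReal.ofReal (f s)) < ⊤ := lt_top_iff_ne_top.2 h
    set I : ENNReal := ∫⁻ s in Ioo (0:ℝ) t, ENNReal.ofReal (f s) with hI
    -- choose a near 0 with β a very small
    set M : ℝ := Real.log (β t₀) - (I.toReal + 1) / c ^ 2 with hM
    have hβ0cont : ContinuousWithinAt β (Icc 0 1) 0 :=
      hβc 0 (left_mem_Icc.2 zero_le_one)
    have htend : Filter.Tendsto β (nhdsWithin 0 (Ioo (0:ℝ) t₀)) (nhds 0) := by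
      have h1 : Filter.Tendsto β (nhdsWithin 0 (Icc 0 1)) (nhds (β 0)) := hβ0cont.tendsto
      rw [hβ0] at h1
      exact h1.mono_left (nhdsWithin_mono _ (fun x hx => ⟨hx.1.le, le_trans hx.2.le ht₀mem.2.le⟩))
    have hev : ∀ᶠ x in nhdsWithin 0 (Ioo (0:ℝ) t₀), β x < Real.exp M :=
      htend.eventually (eventually_lt_nhds (Real.exp_pos M))
    have hne : (nhdsWithin (0:ℝ) (Ioo 0 t₀)).NeBot := by
      apply mem_closure_iff_nhdsWithin_neBot.1
      rw [closure_Ioo ht₀mem.1.ne]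
      exact ⟨le_rfl, ht₀mem.1.le⟩
    obtain ⟨a, haev, ha⟩ := (hev.and (eventually_mem_nhdsWithin)).exists
    have hβa : Real.log (β a) < M :=
      (Real.log_lt_iff_lt_exp (hβpos a ⟨ha.1, lt_trans ha.2 ht₀mem.2⟩)).2 (by simpa using haev)
    have hbound := key a ha
    have : I.toReal + 1 ≤ c ^ 2 * (Real.log (β t₀) - Real.log (β a)) := by
      have h1 : (I.toReal + 1) / c ^ 2 < Real.log (β t₀) - Real.log (β a) := by
        rw [hM] at hβa; linarith
      calc I.toReal + 1 = (I.toReal + 1) / c ^ 2 * c ^ 2 := by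
            field_simp
        _ ≤ (Real.log (β t₀) - Real.log (β a)) * c ^ 2 := by
            apply mul_le_mul_of_nonneg_right h1.le (by positivity)
        _ = c ^ 2 * (Real.log (β t₀) - Real.log (β a)) := by ring
    have hle : ENNReal.ofReal (I.toReal + 1) ≤ I :=
      le_trans (ENNReal.ofReal_le_ofReal this) hbound
    have hgt : I < ENNReal.ofReal (I.toReal + 1) := by
      rw [ENNReal.lt_ofReal_iff_toReal_lt h]
      linarith [ENNReal.toReal_nonneg (a := I)]
    exact absurd hle (not_le.2 hgt)
  refine ⟨?_, htop⟩
  intro hInt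
  have hfin : (∫⁻ s in Ioo (0:ℝ) t, (‖f s‖₊ : ENNReal)) < ⊤ := hInt.2
  have : (∫⁻ s in Ioo (0:ℝ) t, ENNReal.ofReal (f s))
      ≤ ∫⁻ s in Ioo (0:ℝ) t, (‖f s‖₊ : ENNReal) := by
    apply MeasureTheory.lintegral_mono
    intro s
    show ENNReal.ofReal (f s) ≤ (‖f s‖₊ : ENNReal)
    rw [← enorm_eq_nnnorm, Real.enorm_eq_ofReal_abs]
    exact ENNReal.ofReal_le_ofReal (le_abs_self _)
  rw [htop] at this
  exact absurd (lt_of_le_of_lt this hfin) (lt_irrefl ⊤)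
end

section
/- Let α, β : [0,1] → ℝ be C¹ with α_t > 0 and β̇_t > 0 for all t ∈ (0,1), β_t > 0 on (0,1], α_1 = 0 and β_1 = 1, and set ε*_t := α_t²·β̇_t/β_t − α_t·α̇_t. Define the Gaussian-data optimal SDE drift b*(t, x) := −(2·ε*_t/(α_t² + β_t²))·x + (β̇_t/β_t)·x for (t, x) ∈ (0,1) × ℝ^d. Then b*(t, x) = 0 for all (t, x) ∈ (0,1) × ℝ^d if and only if α_t² + β_t² = β_t for all t ∈ (0,1], i.e., if and only if α_t = √(β_t(1 − β_t)) for all t ∈ (0,1]. -/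
/-- Let `α, β` be C¹ on `[0,1]` with `α > 0` and `β̇ > 0` on `(0,1)`,
`β > 0` on `(0,1]`, `α_1 = 0`, `β_1 = 1`. The Gaussian-data optimal SDE drift
`b*(t,x) = −(2ε*_t/(α_t² + β_t²))·x + (β̇_t/β_t)·x` (with
`ε*_t = α_t²·β̇_t/β_t − α_t·α̇_t`) vanishes identically on `(0,1) × ℝ^d` iff
`α_t² + β_t² = β_t` on `(0,1]`, i.e. iff `α_t = √(β_t(1 − β_t))` on `(0,1]`. -/
theorem stmt7 (d : ℕ) (hd : 0 < d) (α β α' β' : ℝ → ℝ)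
    (hαc : ContinuousOn α (Set.Icc 0 1)) (hβc : ContinuousOn β (Set.Icc 0 1))
    (hα : ∀ t ∈ Set.Ioo (0:ℝ) 1, HasDerivAt α (α' t) t)
    (hβ : ∀ t ∈ Set.Ioo (0:ℝ) 1, HasDerivAt β (β' t) t)
    (hαpos : ∀ t ∈ Set.Ioo (0:ℝ) 1, 0 < α t)
    (hβ' : ∀ t ∈ Set.Ioo (0:ℝ) 1, 0 < β' t)
    (hβpos : ∀ t ∈ Set.Ioc (0:ℝ) 1, 0 < β t)
    (hα1 : α 1 = 0) (hβ1 : β 1 = 1) :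
    ((∀ t ∈ Set.Ioo (0:ℝ) 1, ∀ x : Fin d → ℝ,
        (-(2 * ((α t) ^ 2 * β' t / β t - α t * α' t) / ((α t) ^ 2 + (β t) ^ 2))) • x
          + (β' t / β t) • x = 0)
      ↔ (∀ t ∈ Set.Ioc (0:ℝ) 1, (α t) ^ 2 + (β t) ^ 2 = β t)) ∧
    ((∀ t ∈ Set.Ioc (0:ℝ) 1, (α t) ^ 2 + (β t) ^ 2 = β t)
      ↔ (∀ t ∈ Set.Ioc (0:ℝ) 1, α t = Real.sqrt (β t * (1 - β t)))) := by
  have hβmono : StrictMonoOn β (Set.Icc 0 1) := by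
    apply strictMonoOn_of_deriv_pos (convex_Icc 0 1) hβc
    intro x hx
    rw [interior_Icc] at hx
    rw [(hβ x hx).deriv]
    exact hβ' x hx
  have hβle : ∀ t ∈ Set.Ioc (0:ℝ) 1, β t ≤ 1 := by
    intro t ht
    rcases eq_or_lt_of_le ht.2 with h | h
    · rw [h, hβ1]
    · have := hβmono (Set.mem_Icc.2 ⟨ht.1.le, ht.2⟩)
        (Set.mem_Icc.2 ⟨zero_le_one, le_refl 1⟩) h
      rw [hβ1] at this; exact this.le
  constructor
  · constructor
    · -- drift vanishes → α²+β² = β on (0,1]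
      intro h t ht
      -- scalar relation on Ioo
      have key : ∀ s ∈ Set.Ioo (0:ℝ) 1,
          β' s * (α s ^ 2 + β s ^ 2) = 2 * (α s ^ 2 * β' s - α s * α' s * β s) := by
        intro s hs
        have hb := hβpos s ⟨hs.1, hs.2.le⟩
        have hS : (0:ℝ) < α s ^ 2 + β s ^ 2 := by positivity
        have hx := h s hs (fun _ => 1)
        have h2 := congrFun hx ⟨0, hd⟩
        simp only [Pi.add_apply, Pi.smul_apply, smul_eq_mul, mul_one, Pi.zero_apply] at h2
        have h3 : -(2 * (α s ^ 2 * β' s / β s - α s * α' s) / (α s ^ 2 + β s ^ 2))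
            + β' s / β s = 0 := h2
        field_simp at h3
        nlinarith [h3]
      -- the function (α²+β²)/β is constant on (0,1]
      set H : ℝ → ℝ := fun s => (α s ^ 2 + β s ^ 2) / β s with hH
      rcases eq_or_lt_of_le ht.2 with h1 | h1
      · rw [h1, hα1, hβ1]; norm_num
      · -- use constancy on [t,1]
        have hsub : Set.Icc t 1 ⊆ Set.Icc (0:ℝ) 1 :=
          Set.Icc_subset_Icc ht.1.le le_rfl
        have hbne : ∀ x ∈ Set.Icc t 1, β x ≠ 0 := fun x hx =>
          (hβpos x ⟨lt_of_lt_of_le ht.1 hx.1, hx.2⟩).ne'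
        have hHc : ContinuousOn H (Set.Icc t 1) :=
          (((hαc.mono hsub).pow 2).add ((hβc.mono hsub).pow 2)).div (hβc.mono hsub) hbne
        have hHd : ∀ x ∈ Set.Ico t 1, HasDerivWithinAt H 0 (Set.Ici x) x := by
          intro x hx
          have hxo : x ∈ Set.Ioo (0:ℝ) 1 := ⟨lt_of_lt_of_le ht.1 hx.1, hx.2⟩
          have hb := hβpos x ⟨hxo.1, hxo.2.le⟩
          have hnum : HasDerivAt (fun s => α s ^ 2 + β s ^ 2)
              (2 * α x * α' x + 2 * β x * β' x) x := by
            have h1 := ((hα x hxo).fun_pow 2).fun_add ((hβ x hxo).fun_pow 2)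
            exact h1.congr_deriv (by norm_num)
          have hder : HasDerivAt H
              (((2 * α x * α' x + 2 * β x * β' x) * β x
                 - (α x ^ 2 + β x ^ 2) * β' x) / (β x) ^ 2) x :=
            hnum.div (hβ x hxo) hb.ne'
          have hzero : ((2 * α x * α' x + 2 * β x * β' x) * β x
              - (α x ^ 2 + β x ^ 2) * β' x) / (β x) ^ 2 = 0 := by
            have hk := key x hxo
            have : (2 * α x * α' x + 2 * β x * β' x) * β x
                - (α x ^ 2 + β x ^ 2) * β' x = 0 := by nlinarith [hk]
            rw [this, zero_div]
          rw [hzero] at hder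
          exact hder.hasDerivWithinAt
        have hconst := constant_of_has_deriv_right_zero hHc hHd 1
          (Set.mem_Icc.2 ⟨h1.le, le_rfl⟩)
        have hH1 : H 1 = 1 := by simp [hH, hα1, hβ1]
        have hHt : H t = 1 := by rw [← hconst, hH1]
        have hb := hβpos t ht
        simp only [hH] at hHt
        field_simp [hH] at hHt
        linarith [hHt]
    · -- α²+β² = β → drift vanishes
      intro h t ht x
      have hb := hβpos t ⟨ht.1, ht.2.le⟩
      have heq := h t ⟨ht.1, ht.2.le⟩
      -- derivative of the identity
      have hg : HasDerivAt (fun s => α s ^ 2 + β s ^ 2 - β s)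
          (2 * α t * α' t + 2 * β t * β' t - β' t) t := by
        have h1 := (((hα t ht).fun_pow 2).fun_add ((hβ t ht).fun_pow 2)).fun_sub (hβ t ht)
        exact h1.congr_deriv (by norm_num)
      have hev : (fun s => α s ^ 2 + β s ^ 2 - β s) =ᶠ[nhds t] fun _ => 0 := by
        filter_upwards [Ioo_mem_nhds ht.1 ht.2] with s hs
        have := h s ⟨hs.1, hs.2.le⟩; linarith
      have hg0 : HasDerivAt (fun s => α s ^ 2 + β s ^ 2 - β s) 0 t :=
        (hasDerivAt_const t (0:ℝ)).congr_of_eventuallyEq hev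
      have hrel : 2 * α t * α' t + 2 * β t * β' t - β' t = 0 := hg.unique hg0
      have hc : (-(2 * ((α t) ^ 2 * β' t / β t - α t * α' t) / ((α t) ^ 2 + (β t) ^ 2)))
          + β' t / β t = 0 := by
        rw [heq]
        field_simp
        linear_combination (β t) * hrel + (-2 * β' t) * heq
      rw [← add_smul, hc, zero_smul]
  · constructor
    · intro h t ht
      have hα2 : α t ^ 2 = β t * (1 - β t) := by have := h t ht; nlinarith
      have hαnn : 0 ≤ α t := by
        rcases eq_or_lt_of_le ht.2 with h1 | h1
        · rw [h1, hα1]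
        · exact (hαpos t ⟨ht.1, h1⟩).le
      rw [← hα2, Real.sqrt_sq hαnn]
    · intro h t ht
      have hb := hβpos t ht
      have hb1 := hβle t ht
      have h2 : α t ^ 2 = β t * (1 - β t) := by
        rw [h t ht, Real.sq_sqrt]; nlinarith
      nlinarith
end
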